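/- Let f be the CDF of N(0, σ²). Then sup_{|x|≤α} f(x)(1-f(x))/f'(x)² ≤ π·σ²·e^{α²/(2σ²)}. -/

import Mathlib

open Real

noncomputable def stdNormalPDF (t : ℝ) : ℝ := (Real.sqrt (2 * Real.pi))⁻¹ * Real.exp (-t ^ 2 / 2)

noncomputable def stdNormalCDF (x : ℝ) : ℝ := ∫ t in Set.Iic x, stdNormalPDF t

/-!
Write `f(x) = Φ(x/σ)`, so `f(x)(1 - f(x))/f'(x)² = σ² Φ(t)(1 - Φ(t))/φ(t)²` with `t = x/σ` and
`φ(t)² = e^{-t²}/(2π)`. By symmetry `Φ(t)(1 - Φ(t)) ≤ Φ(-|t|)`, and shifting the integration variable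
gives the Chernoff-type tail bound `Φ(-s) ≤ e^{-s²/2}/2` for `s ≥ 0`. Together the ratio is at most
`π σ² e^{t²/2} ≤ π σ² e^{α²/(2σ²)}`.
-/

open Set MeasureTheory

lemma stdNormalPDF_pos (t : ℝ) : 0 < stdNormalPDF t := by
  unfold stdNormalPDF
  positivity

lemma stdNormalPDF_neg (t : ℝ) : stdNormalPDF (-t) = stdNormalPDF t := by
  simp only [stdNormalPDF, neg_sq]

lemma stdNormalPDF_eq (t : ℝ) :
    stdNormalPDF t = (Real.sqrt (2 * π))⁻¹ * Real.exp (-(1 / 2) * t ^ 2) := by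
  unfold stdNormalPDF
  ring_nf

lemma stdNormalPDF_sq (t : ℝ) : stdNormalPDF t ^ 2 = (2 * π)⁻¹ * Real.exp (-t ^ 2) := by
  rw [stdNormalPDF, mul_pow, inv_pow, sq_sqrt (by positivity), ← Real.exp_nat_mul]
  congr 2
  ring

lemma continuous_stdNormalPDF : Continuous stdNormalPDF := by
  unfold stdNormalPDF
  fun_prop

lemma integrable_stdNormalPDF : Integrable stdNormalPDF := by
  simpa only [← stdNormalPDF_eq] using
    (integrable_exp_neg_mul_sq (b := 1 / 2) (by norm_num)).const_mul (Real.sqrt (2 * π))⁻¹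

lemma integral_stdNormalPDF : ∫ t, stdNormalPDF t = 1 := by
  simp only [stdNormalPDF_eq, integral_const_mul, integral_gaussian]
  rw [inv_mul_eq_one₀ (by positivity)]
  congr 1
  ring

lemma stdNormalCDF_add_integral_Ioi (x : ℝ) :
    stdNormalCDF x + ∫ t in Ioi x, stdNormalPDF t = 1 := by
  rw [stdNormalCDF, ← setIntegral_union (Iic_disjoint_Ioi le_rfl) measurableSet_Ioi
    integrable_stdNormalPDF.integrableOn integrable_stdNormalPDF.integrableOn, Iic_union_Ioi,
    Measure.restrict_univ, integral_stdNormalPDF]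

lemma stdNormalCDF_neg (x : ℝ) : stdNormalCDF (-x) = 1 - stdNormalCDF x := by
  have h : stdNormalCDF (-x) = ∫ t in Ioi x, stdNormalPDF t := by
    rw [stdNormalCDF]
    simpa only [stdNormalPDF_neg, neg_neg] using integral_comp_neg_Iic (-x) stdNormalPDF
  linarith [stdNormalCDF_add_integral_Ioi x]

lemma stdNormalCDF_zero : stdNormalCDF 0 = 1 / 2 := by
  have h := stdNormalCDF_neg 0
  rw [neg_zero] at h
  linarith

lemma stdNormalCDF_nonneg (x : ℝ) : 0 ≤ stdNormalCDF x :=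
  setIntegral_nonneg measurableSet_Iic fun t _ => (stdNormalPDF_pos t).le

lemma stdNormalCDF_le_one (x : ℝ) : stdNormalCDF x ≤ 1 := by
  linarith [stdNormalCDF_nonneg (-x), stdNormalCDF_neg x]

lemma hasDerivAt_stdNormalCDF (x : ℝ) : HasDerivAt stdNormalCDF (stdNormalPDF x) x := by
  have h : stdNormalCDF = fun u => stdNormalCDF 0 + ∫ t in (0 : ℝ)..u, stdNormalPDF t := by
    funext u
    rw [← intervalIntegral.integral_Iic_sub_Iic integrable_stdNormalPDF.integrableOn
      integrable_stdNormalPDF.integrableOn, stdNormalCDF, stdNormalCDF]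
    ring
  rw [h]
  exact (intervalIntegral.integral_hasDerivAt_right integrable_stdNormalPDF.intervalIntegrable
    (continuous_stdNormalPDF.stronglyMeasurableAtFilter _ _)
    continuous_stdNormalPDF.continuousAt).const_add _

lemma stdNormalPDF_sub_le {s u : ℝ} (hs : 0 ≤ s) (hu : u ≤ 0) :
    stdNormalPDF (u - s) ≤ Real.exp (-s ^ 2 / 2) * stdNormalPDF u := by
  rw [stdNormalPDF, stdNormalPDF, mul_left_comm, ← Real.exp_add]
  gcongr
  nlinarith [mul_nonneg (neg_nonneg.mpr hu) hs]

lemma stdNormalCDF_neg_le {s : ℝ} (hs : 0 ≤ s) :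
    stdNormalCDF (-s) ≤ 1 / 2 * Real.exp (-s ^ 2 / 2) := by
  have hshift : stdNormalCDF (-s) = ∫ u in Iic (0 : ℝ), stdNormalPDF (u - s) := by
    rw [stdNormalCDF, ← (measurePreserving_sub_right volume s).setIntegral_preimage_emb
      (measurableEmbedding_subRight s)]
    congr 2
    ext u
    simp
  calc stdNormalCDF (-s) = ∫ u in Iic (0 : ℝ), stdNormalPDF (u - s) := hshift
    _ ≤ ∫ u in Iic (0 : ℝ), Real.exp (-s ^ 2 / 2) * stdNormalPDF u :=
        setIntegral_mono_on (integrable_stdNormalPDF.comp_sub_right s).integrableOn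
          (integrable_stdNormalPDF.const_mul _).integrableOn measurableSet_Iic
          fun u hu => stdNormalPDF_sub_le hs hu
    _ = 1 / 2 * Real.exp (-s ^ 2 / 2) := by
        rw [integral_const_mul, ← stdNormalCDF, stdNormalCDF_zero, mul_comm]

lemma stdNormalCDF_mul_one_sub_le (t : ℝ) :
    stdNormalCDF t * (1 - stdNormalCDF t) ≤ 1 / 2 * Real.exp (-t ^ 2 / 2) := by
  wlog ht : 0 ≤ t generalizing t
  · simpa only [stdNormalCDF_neg, sub_sub_cancel, neg_sq, mul_comm] using this (-t) (by linarith)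
  calc stdNormalCDF t * (1 - stdNormalCDF t) ≤ 1 - stdNormalCDF t :=
        mul_le_of_le_one_left (by linarith [stdNormalCDF_le_one t]) (stdNormalCDF_le_one t)
    _ = stdNormalCDF (-t) := (stdNormalCDF_neg t).symm
    _ ≤ 1 / 2 * Real.exp (-t ^ 2 / 2) := stdNormalCDF_neg_le ht

lemma stdNormalCDF_mul_one_sub_div_sq_le (t : ℝ) :
    stdNormalCDF t * (1 - stdNormalCDF t) / stdNormalPDF t ^ 2 ≤ π * Real.exp (t ^ 2 / 2) := by
  rw [stdNormalPDF_sq, div_le_iff₀ (by positivity)]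
  calc stdNormalCDF t * (1 - stdNormalCDF t) ≤ 1 / 2 * Real.exp (-t ^ 2 / 2) :=
        stdNormalCDF_mul_one_sub_le t
    _ = π * Real.exp (t ^ 2 / 2) * ((2 * π)⁻¹ * Real.exp (-t ^ 2)) := by
        rw [mul_mul_mul_comm, ← Real.exp_add]
        field_simp
        ring_nf

theorem stmt11_general (σ α : ℝ) (hσ : 0 < σ)
    (f : ℝ → ℝ) (hf : ∀ x, f x = stdNormalCDF (x / σ)) :
    ∀ x, |x| ≤ α →
      f x * (1 - f x) / (deriv f x) ^ 2 ≤ Real.pi * σ ^ 2 * Real.exp (α ^ 2 / (2 * σ ^ 2)) := by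
  intro x hx
  have hderiv : deriv f x = stdNormalPDF (x / σ) / σ := by
    rw [funext hf]
    exact ((hasDerivAt_stdNormalCDF _).comp x ((hasDerivAt_id x).div_const σ)).deriv.trans
      (by simp [div_eq_mul_inv])
  have hratio : f x * (1 - f x) / deriv f x ^ 2 = σ ^ 2 *
      (stdNormalCDF (x / σ) * (1 - stdNormalCDF (x / σ)) / stdNormalPDF (x / σ) ^ 2) := by
    rw [hf, hderiv, div_pow]
    field_simp
  have hexp : Real.exp ((x / σ) ^ 2 / 2) ≤ Real.exp (α ^ 2 / (2 * σ ^ 2)) := by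
    rw [div_pow, div_div, mul_comm (σ ^ 2)]
    gcongr Real.exp (?_ / _)
    exact sq_le_sq' (abs_le.mp hx).1 (abs_le.mp hx).2
  rw [hratio, mul_comm π, mul_assoc]
  gcongr
  exact (stdNormalCDF_mul_one_sub_div_sq_le _).trans (mul_le_mul_of_nonneg_left hexp pi_pos.le)

/-- For `f` the CDF of `N(0, σ²)`: `sup_{|x| ≤ α} f(x)(1 - f(x))/f'(x)² ≤ π σ² e^{α²/(2σ²)}`. -/
theorem stmt11 (σ α : ℝ) (hσ : 0 < σ) (hα : 0 < α)
    (f : ℝ → ℝ) (hf : ∀ x, f x = stdNormalCDF (x / σ)) :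
    ∀ x, |x| ≤ α →
      f x * (1 - f x) / (deriv f x) ^ 2 ≤ Real.pi * σ ^ 2 * Real.exp (α ^ 2 / (2 * σ ^ 2)) :=
  stmt11_general σ α hσ f hf
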